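/- Let n ≥ 3 and let β ≤ 1/(2n²) and A > 0. Suppose u : [0,T) → [0,∞) is differentiable and satisfies, for all t, u'(t) ≤ c₁·(u(t)·Q(t))^{(n-2)/n}·u(t)^{2/n} − c₂·Q(t)^{(n-2)/n} + L·u(t), where Q(t) ≥ 0, c₁ = (n/2)·6.5, c₂ = (n/2)·15/(A²n²), L ≥ 0, and suppose u(0) ≤ 2/(n²A²). If in addition n²A²·u(t) ≤ 15/6.5 whenever u(t) ≤ 2·u(0)·e^{Lt}, then u(t) ≤ u(0)·e^{Lt} for all t ∈ [0,T) (i.e., the bracketed term is nonpositive whenever u is below the barrier, so u'≤ Lu persists). -/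

import Mathlib

/-!
With `g(t) = u(t) e^{-Lt}` the differential inequality reads `g' ≤ (bracket) e^{-Lt}`, and the
bracket is nonpositive as soon as `n²A²u ≤ 15/6.5`. The hypotheses give this whenever `g` lies
below a level `δ > g(0)` (namely `2u(0)`, or a small constant times `e^{-Lt}` if `u(0) = 0`).
A fencing argument shows that a function whose derivative is nonpositive below such a level
never reaches it, so `g` is nonincreasing and `u(t) ≤ u(0) e^{Lt}`.
-/

open Set Real

theorem rpow_mul_rpow_eq_mul_rpow {u Q a b : ℝ} (hu : 0 ≤ u) (hQ : 0 ≤ Q) (hab : a + b = 1) :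
    (u * Q) ^ a * u ^ b = u * Q ^ a := by
  rw [mul_rpow hu hQ, mul_right_comm, ← rpow_add' hu (by rw [hab]; exact one_ne_zero), hab,
    rpow_one]

theorem mul_rpow_mul_rpow_le_of_mul_le {u Q a b c d : ℝ} (hu : 0 ≤ u) (hQ : 0 ≤ Q)
    (hab : a + b = 1) (hcd : c * u ≤ d) : c * (u * Q) ^ a * u ^ b ≤ d * Q ^ a := by
  rw [mul_assoc, rpow_mul_rpow_eq_mul_rpow hu hQ hab, ← mul_assoc]
  exact mul_le_mul_of_nonneg_right hcd (rpow_nonneg hQ a)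

theorem reaction_term_nonpos_of_small_energy {n A u Q : ℝ} (hn : 0 < n) (hA : 0 < A)
    (hu : 0 ≤ u) (hQ : 0 ≤ Q) (hsmall : n ^ 2 * A ^ 2 * u ≤ 15 / 6.5) :
    n / 2 * 6.5 * (u * Q) ^ ((n - 2) / n) * u ^ (2 / n)
      - n / 2 * (15 / (A ^ 2 * n ^ 2)) * Q ^ ((n - 2) / n) ≤ 0 := by
  have hexp : (n - 2) / n + 2 / n = 1 := by field_simp; ring
  have hcd : n / 2 * 6.5 * u ≤ n / 2 * (15 / (A ^ 2 * n ^ 2)) := by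
    rw [mul_assoc]
    gcongr
    rw [le_div_iff₀ (by positivity)]
    linarith
  exact sub_nonpos.2 (mul_rpow_mul_rpow_le_of_mul_le hu hQ hexp hcd)

section Fencing

variable {g g' : ℝ → ℝ} {a b δ : ℝ}

theorem lt_of_deriv_nonpos_below (hg : ContinuousOn g (Icc a b))
    (hg' : ∀ x ∈ Ico a b, HasDerivWithinAt g (g' x) (Ici x) x) (ha : g a < δ)
    (hδ : ∀ x ∈ Ico a b, g x < δ → g' x ≤ 0) : ∀ x ∈ Icc a b, g x < δ := by
  intro x hx
  have hab : 0 < b - a + 1 := by linarith [hx.1.trans hx.2]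
  -- a line of positive slope from just above `g a` that stays below `δ` on `[a, b]`
  set η := (δ - g a) / (2 * (b - a + 1))
  have hη : 0 < η := div_pos (by linarith) (by positivity)
  have hline : ∀ y ∈ Icc a b, (g a + δ) / 2 + η * (y - a) < δ := by
    intro y hy
    have : η * (y - a) < η * (b - a + 1) := mul_lt_mul_of_pos_left (by linarith [hy.2]) hη
    have : η * (b - a + 1) = (δ - g a) / 2 := by simp only [η]; field_simp
    linarith
  have hB : ∀ y, HasDerivAt (fun y => (g a + δ) / 2 + η * (y - a)) η y := fun y => by
    simpa using ((hasDerivAt_id y).sub_const a).const_mul η |>.const_add ((g a + δ) / 2)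
  refine lt_of_le_of_lt ?_ (hline x hx)
  refine image_le_of_deriv_right_lt_deriv_boundary hg hg' (by linarith) hB
    (fun y hy hgy => ?_) hx
  exact (hδ y hy (hgy ▸ hline y (Ico_subset_Icc_self hy))).trans_lt hη

theorem le_of_deriv_nonpos_below (hg : ContinuousOn g (Icc a b))
    (hg' : ∀ x ∈ Ico a b, HasDerivWithinAt g (g' x) (Ici x) x) (ha : g a < δ)
    (hδ : ∀ x ∈ Ico a b, g x < δ → g' x ≤ 0) : ∀ x ∈ Icc a b, g x ≤ g a := by
  have hlt := lt_of_deriv_nonpos_below hg hg' ha hδ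
  exact image_le_of_deriv_right_le_deriv_boundary hg hg' le_rfl continuousOn_const
    (fun x _ => hasDerivWithinAt_const x _ (g a))
    (fun x hx => hδ x hx (hlt x (Ico_subset_Icc_self hx)))

end Fencing

theorem le_mul_exp_of_deriv_le_mul_below {u u' : ℝ → ℝ} {a b L δ : ℝ}
    (hu : ∀ x ∈ Icc a b, HasDerivAt u (u' x) x) (ha : u a < δ)
    (hδ : ∀ x ∈ Ico a b, u x * exp (-(L * (x - a))) < δ → u' x ≤ L * u x) :
    ∀ x ∈ Icc a b, u x ≤ u a * exp (L * (x - a)) := by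
  set g := fun x => u x * exp (-(L * (x - a)))
  have hg : ∀ x ∈ Icc a b, HasDerivAt g ((u' x - L * u x) * exp (-(L * (x - a)))) x := by
    intro x hx
    have hE : HasDerivAt (fun x => exp (-(L * (x - a)))) (exp (-(L * (x - a))) * -L) x := by
      simpa using (((hasDerivAt_id x).sub_const a).const_mul L).neg.exp
    exact ((hu x hx).mul hE).congr_deriv (by ring)
  have hmono := le_of_deriv_nonpos_below (g := g)
    (fun x hx => (hg x hx).continuousAt.continuousWithinAt)
    (fun x hx => (hg x (Ico_subset_Icc_self hx)).hasDerivWithinAt) (by simpa [g] using ha)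
    (fun x hx hgx => mul_nonpos_of_nonpos_of_nonneg (sub_nonpos.2 (hδ x hx hgx)) (exp_pos _).le)
  intro x hx
  have := hmono x hx
  simp only [g, sub_self, mul_zero, neg_zero, exp_zero, mul_one] at this
  rwa [← le_div_iff₀ (exp_pos _), div_eq_mul_inv, ← exp_neg, neg_neg] at this

theorem stmt17_general (n : ℕ) (hn : 3 ≤ n) (A L T : ℝ)
    (hA : 0 < A) (hL : 0 ≤ L)
    (u u' Q : ℝ → ℝ)
    (hu0 : ∀ t ∈ Set.Ico (0:ℝ) T, 0 ≤ u t)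
    (hQ0 : ∀ t ∈ Set.Ico (0:ℝ) T, 0 ≤ Q t)
    (hderiv : ∀ t ∈ Set.Ico (0:ℝ) T, HasDerivAt u (u' t) t)
    (hineq : ∀ t ∈ Set.Ico (0:ℝ) T,
      u' t ≤ ((n:ℝ) / 2) * 6.5 * (u t * Q t) ^ (((n:ℝ) - 2) / n) * (u t) ^ ((2:ℝ) / n)
        - ((n:ℝ) / 2) * (15 / (A ^ 2 * n ^ 2)) * (Q t) ^ (((n:ℝ) - 2) / n)
        + L * u t)
    (hbarrier : ∀ t ∈ Set.Ico (0:ℝ) T,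
      u t ≤ 2 * u 0 * Real.exp (L * t) → (n:ℝ) ^ 2 * A ^ 2 * u t ≤ 15 / 6.5) :
    ∀ t ∈ Set.Ico (0:ℝ) T, u t ≤ u 0 * Real.exp (L * t) := by
  intro t ht
  have hn0 : (0:ℝ) < n := Nat.cast_pos.2 (by omega)
  have hsub : Icc 0 t ⊆ Ico 0 T := Icc_subset_Ico_right ht.2
  have hlin : ∀ x ∈ Ico 0 T, (n:ℝ) ^ 2 * A ^ 2 * u x ≤ 15 / 6.5 → u' x ≤ L * u x :=
    fun x hx hsmall => by
      linarith [hineq x hx,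
        reaction_term_nonpos_of_small_energy hn0 hA (hu0 x hx) (hQ0 x hx) hsmall]
  set κ : ℝ := 15 / 6.5 / (n ^ 2 * A ^ 2)
  have hκ : 0 < κ := by positivity
  have hsmall : ∀ x ∈ Ico 0 t, u x * exp (-(L * x)) < max (2 * u 0) (κ * exp (-(L * t))) →
      (n:ℝ) ^ 2 * A ^ 2 * u x ≤ 15 / 6.5 := by
    intro x hx hgx
    rcases lt_max_iff.1 hgx with hgx | hgx
    · refine hbarrier x (hsub (Ico_subset_Icc_self hx)) ?_
      rw [exp_neg, ← div_eq_mul_inv, div_lt_iff₀ (exp_pos _)] at hgx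
      exact hgx.le
    · have hdecay : exp (-(L * t)) ≤ exp (-(L * x)) := exp_le_exp.2 (by nlinarith [hx.2])
      have hux : u x < κ := lt_of_mul_lt_mul_right
        (hgx.trans_le (mul_le_mul_of_nonneg_left hdecay hκ.le)) (exp_pos _).le
      rw [lt_div_iff₀ (by positivity)] at hux
      linarith
  have hstart : u 0 < max (2 * u 0) (κ * exp (-(L * t))) := by
    rcases (hu0 0 (hsub ⟨le_rfl, ht.1⟩)).eq_or_lt with h | h
    · exact lt_max_of_lt_right (h ▸ by positivity)
    · exact lt_max_of_lt_left (by linarith)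
  simpa using le_mul_exp_of_deriv_le_mul_below (fun x hx => hderiv x (hsub hx)) hstart
    (fun x hx hgx => hlin x (hsub (Ico_subset_Icc_self hx)) (hsmall x hx (by simpa using hgx)))
    t ⟨ht.1, le_rfl⟩

/-- the barrier argument preserving the small-energy condition
along the local Ricci flow.  With `c₁ = (n/2)·6.5`, `c₂ = (n/2)·15/(A²n²)`,
if `u' ≤ c₁ (u·Q)^{(n-2)/n} u^{2/n} − c₂ Q^{(n-2)/n} + L·u`, `u(0) ≤ 2/(n²A²)`,
and `n²A²·u(t) ≤ 15/6.5` whenever `u(t) ≤ 2·u(0)·e^{Lt}`, then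
`u(t) ≤ u(0)·e^{Lt}` on `[0,T)`. -/
theorem stmt17 (n : ℕ) (hn : 3 ≤ n) (β A L T : ℝ)
    (hβ : β ≤ 1 / (2 * n ^ 2)) (hA : 0 < A) (hL : 0 ≤ L)
    (u u' Q : ℝ → ℝ)
    (hu0 : ∀ t ∈ Set.Ico (0:ℝ) T, 0 ≤ u t)
    (hQ0 : ∀ t ∈ Set.Ico (0:ℝ) T, 0 ≤ Q t)
    (hderiv : ∀ t ∈ Set.Ico (0:ℝ) T, HasDerivAt u (u' t) t)
    (hineq : ∀ t ∈ Set.Ico (0:ℝ) T,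
      u' t ≤ ((n:ℝ) / 2) * 6.5 * (u t * Q t) ^ (((n:ℝ) - 2) / n) * (u t) ^ ((2:ℝ) / n)
        - ((n:ℝ) / 2) * (15 / (A ^ 2 * n ^ 2)) * (Q t) ^ (((n:ℝ) - 2) / n)
        + L * u t)
    (hinit : u 0 ≤ 2 / (n ^ 2 * A ^ 2))
    (hbarrier : ∀ t ∈ Set.Ico (0:ℝ) T,
      u t ≤ 2 * u 0 * Real.exp (L * t) → (n:ℝ) ^ 2 * A ^ 2 * u t ≤ 15 / 6.5) :
    ∀ t ∈ Set.Ico (0:ℝ) T, u t ≤ u 0 * Real.exp (L * t) :=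
  stmt17_general n hn A L T hA hL u u' Q hu0 hQ0 hderiv hineq hbarrier
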